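/- Sequential weak lower semicontinuity of convex integrands with an a.e.-convergent parameter: Let Ω ⊂ ℝⁿ be a measurable set of finite Lebesgue measure, and let Φ : ℝ^m × ℝ^N → [0,∞) be continuous such that for each d ∈ ℝ^m the map v ↦ Φ(d,v) is convex and continuously differentiable, with the derivative D_vΦ(d,v) jointly continuous in (d,v). Let v^k, v : Ω → ℝ^N be integrable with v^k ⇀ v weakly in L¹(Ω,ℝ^N) and sup_k ∫_Ω |v^k| dx < ∞, and let d^k, d : Ω → ℝ^m be measurable with d^k → d pointwise almost everywhere. Then liminf_{k→∞} ∫_Ω Φ(d^k(x), v^k(x)) dx ≥ ∫_Ω Φ(d(x), v(x)) dx. -/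

import Mathlib

/-!
By convexity, `Φ(dₖ, vₖ) ≥ Φ(dₖ, v) + ⟪∇Φ(dₖ, v), vₖ - v⟫`. Egorov's theorem and tightness of
finite measures give a set `F` with complement of arbitrarily small measure on which `dₖ → d`
uniformly and `(d, v)` stays in a compact set. On `F`, `∇Φ(dₖ, v) → ∇Φ(d, v)` uniformly, so the
integral of the linear term tends to `0`: weak convergence handles the bounded field `∇Φ(d, v)`,
and the uniform error is controlled by the `L¹` bound on `vₖ - v`. Bounded convergence gives
`∫_F Φ(dₖ, v) → ∫_F Φ(d, v)`. Truncating `Φ(d, v)` at a level `L` makes the contribution of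
the small exceptional set negligible, and monotone convergence in `L` concludes.
-/

open MeasureTheory Filter Topology
open scoped ENNReal InnerProductSpace

theorem ConvexOn.add_fderiv_sub_le {E : Type*} [NormedAddCommGroup E] [NormedSpace ℝ E]
    {s : Set E} {f : E → ℝ} {f' : E →L[ℝ] ℝ} {u w : E} (hf : ConvexOn ℝ s f) (hu : u ∈ s)
    (hw : w ∈ s) (hf' : HasFDerivAt f f' u) : f u + f' (w - u) ≤ f w := by
  let L : ℝ →ᵃ[ℝ] E := AffineMap.lineMap u w
  have hL : HasDerivAt (f ∘ L) (f' (w - u)) 0 := by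
    have hf'0 : HasFDerivAt f f' (L 0) := by simpa [L] using hf'
    exact hf'0.comp_hasDerivAt 0 AffineMap.hasDerivAt_lineMap
  have hslope := (hf.comp_affineMap L).le_slope_of_hasDerivAt (x := 0) (y := 1)
    (by simpa [L] using hu) (by simpa [L] using hw) one_pos hL
  have hL01 : slope (f ∘ L) 0 1 = f w - f u := by simp [slope, L]
  linarith

section Measure

variable {α : Type*} [MeasurableSpace α] {μ : Measure α}

theorem ofReal_integral_le_lintegral_ofReal (f : α → ℝ) :
    ENNReal.ofReal (∫ x, f x ∂μ) ≤ ∫⁻ x, ENNReal.ofReal (f x) ∂μ := by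
  by_cases hf : Integrable f μ
  · rw [integral_eq_lintegral_pos_part_sub_lintegral_neg_part hf]
    exact (ENNReal.ofReal_le_ofReal (sub_le_self _ ENNReal.toReal_nonneg)).trans
      ENNReal.ofReal_toReal_le
  · simp [integral_undef hf]

theorem lintegral_le_of_forall_setLIntegral_le {f : α → ℝ≥0∞} (hf : AEMeasurable f μ)
    {c : ℝ≥0∞} (h : ∀ ε : ℝ, 0 < ε → ∃ F, MeasurableSet F ∧ μ Fᶜ ≤ ENNReal.ofReal ε ∧
      ∫⁻ x in F, f x ∂μ ≤ c) :
    ∫⁻ x, f x ∂μ ≤ c := by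
  have htrunc : ∀ L : ℕ, ∫⁻ x, min (f x) L ∂μ ≤ c := by
    intro L
    refine ENNReal.le_of_forall_pos_le_add fun δ hδ _ => ?_
    obtain ⟨F, hF, hFc, hFf⟩ := h (δ / (L + 1)) (by positivity)
    have hLδ : (L : ℝ≥0∞) * ENNReal.ofReal (δ / (L + 1)) ≤ δ := by
      rw [← ENNReal.ofReal_natCast, ← ENNReal.ofReal_mul (by positivity),
        ← ENNReal.ofReal_coe_nnreal]
      refine ENNReal.ofReal_le_ofReal ?_
      rw [mul_div_assoc', div_le_iff₀ (by positivity)]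
      nlinarith [δ.coe_nonneg]
    calc ∫⁻ x, min (f x) L ∂μ
        = ∫⁻ x in F, min (f x) L ∂μ + ∫⁻ x in Fᶜ, min (f x) L ∂μ :=
          (lintegral_add_compl _ hF).symm
      _ ≤ ∫⁻ x in F, f x ∂μ + ∫⁻ _ in Fᶜ, (L : ℝ≥0∞) ∂μ := by
          gcongr with x x <;> simp
      _ ≤ c + L * ENNReal.ofReal (δ / (L + 1)) := by
          rw [setLIntegral_const]
          gcongr
      _ ≤ c + δ := by gcongr
  have hsup : ∀ x, ⨆ L : ℕ, min (f x) L = f x := fun x => by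
    rw [← inf_iSup_eq, ENNReal.iSup_natCast, inf_top_eq]
  calc ∫⁻ x, f x ∂μ = ∫⁻ x, ⨆ L : ℕ, min (f x) L ∂μ := by simp_rw [hsup]
    _ = ⨆ L : ℕ, ∫⁻ x, min (f x) L ∂μ :=
        lintegral_iSup' (fun L => hf.min aemeasurable_const)
          (ae_of_all _ fun x a b hab => min_le_min le_rfl (by exact_mod_cast hab))
    _ ≤ c := iSup_le htrunc

theorem exists_isCompact_measure_preimage_compl_le [IsFiniteMeasure μ] {X : Type*}
    [MetricSpace X] [CompleteSpace X] [SecondCountableTopology X] [MeasurableSpace X]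
    [BorelSpace X] {f : α → X} (hf : Measurable f) {ε : ℝ≥0∞} (hε : 0 < ε) :
    ∃ K, IsCompact K ∧ μ (f ⁻¹' Kᶜ) ≤ ε := by
  obtain ⟨K, hK, hμK⟩ := isTightMeasureSet_iff_exists_isCompact_measure_compl_le.1
    (isTightMeasureSet_singleton (μ := μ.map f)) ε hε
  refine ⟨K, hK, ?_⟩
  simpa [Measure.map_apply hf hK.isClosed.measurableSet.compl] using hμK _ rfl

theorem exists_measurableSet_tendstoUniformlyOn_mapsTo_isCompact [IsFiniteMeasure μ]
    {Y X : Type*} [MetricSpace Y] [MetricSpace X] [CompleteSpace X] [SecondCountableTopology X]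
    [MeasurableSpace X] [BorelSpace X]
    {fk : ℕ → α → Y} {f : α → Y} (hfk : ∀ k, StronglyMeasurable (fk k))
    (hf : StronglyMeasurable f) (hconv : ∀ᵐ x ∂μ, Tendsto (fun k => fk k x) atTop (𝓝 (f x)))
    {p : α → X} (hp : Measurable p) {ε : ℝ} (hε : 0 < ε) :
    ∃ F, MeasurableSet F ∧ μ Fᶜ ≤ ENNReal.ofReal ε ∧ TendstoUniformlyOn fk f atTop F ∧
      ∃ K, IsCompact K ∧ Set.MapsTo p F K := by
  obtain ⟨t, ht, hμt, hunif⟩ := tendstoUniformlyOn_of_ae_tendsto' hfk hf hconv (half_pos hε)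
  obtain ⟨K, hK, hμK⟩ :=
    exists_isCompact_measure_preimage_compl_le (μ := μ) hp (ENNReal.ofReal_pos.2 (half_pos hε))
  refine ⟨p ⁻¹' K ∩ tᶜ, (hp hK.isClosed.measurableSet).inter ht.compl, ?_,
    hunif.mono Set.inter_subset_right, K, hK, fun x hx => hx.1⟩
  calc μ (p ⁻¹' K ∩ tᶜ)ᶜ = μ (p ⁻¹' Kᶜ ∪ t) := by
        rw [Set.compl_inter, compl_compl, Set.preimage_compl]
    _ ≤ μ (p ⁻¹' Kᶜ) + μ t := measure_union_le _ _
    _ ≤ ENNReal.ofReal (ε / 2) + ENNReal.ofReal (ε / 2) := add_le_add hμK hμt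
    _ = ENNReal.ofReal ε := by
        rw [← ENNReal.ofReal_add (by positivity) (by positivity), add_halves]

theorem exists_integral_norm_sub_le {E : Type*} [NormedAddCommGroup E] {u : ℕ → α → E}
    {u₀ : α → E} (hu : ∀ k, Integrable (u k) μ) (hu₀ : Integrable u₀ μ)
    (hbdd : ∃ C, ∀ k, ∫ x, ‖u k x‖ ∂μ ≤ C) :
    ∃ C, ∀ k, ∫ x, ‖u k x - u₀ x‖ ∂μ ≤ C := by
  obtain ⟨C, hC⟩ := hbdd
  refine ⟨C + ∫ x, ‖u₀ x‖ ∂μ, fun k => ?_⟩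
  calc ∫ x, ‖u k x - u₀ x‖ ∂μ ≤ ∫ x, (‖u k x‖ + ‖u₀ x‖) ∂μ :=
        integral_mono ((hu k).sub hu₀).norm ((hu k).norm.add hu₀.norm) fun x => norm_sub_le _ _
    _ ≤ C + ∫ x, ‖u₀ x‖ ∂μ := by
        rw [integral_add (hu k).norm hu₀.norm]
        gcongr
        exact hC k

variable {V : Type*} [NormedAddCommGroup V] [InnerProductSpace ℝ V]

theorem MeasureTheory.Integrable.inner_of_bdd {u φ : α → V} (hu : Integrable u μ)
    (hφ : AEStronglyMeasurable φ μ) {C : ℝ} (hφC : ∀ᵐ x ∂μ, ‖φ x‖ ≤ C) :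
    Integrable (fun x => ⟪u x, φ x⟫_ℝ) μ :=
  (innerSL ℝ).integrable_of_bilin_of_bdd_right C hu hφ hφC

theorem tendsto_setIntegral_inner_of_tendstoUniformlyOn {u G : ℕ → α → V} {G₀ : α → V}
    {F : Set α} (hF : MeasurableSet F) (hu : ∀ k, Integrable (u k) μ)
    (hbdd : ∃ C, ∀ k, ∫ x, ‖u k x‖ ∂μ ≤ C) (hG : TendstoUniformlyOn G G₀ atTop F) :
    Tendsto (fun k => ∫ x in F, ⟪u k x, G k x - G₀ x⟫_ℝ ∂μ) atTop (𝓝 0) := by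
  obtain ⟨C, hC⟩ := hbdd
  have hC0 : 0 ≤ C := (integral_nonneg fun x => norm_nonneg _).trans (hC 0)
  refine Metric.tendsto_nhds.2 fun ε hε => ?_
  filter_upwards [Metric.tendstoUniformlyOn_iff.1 hG (ε / (C + 1)) (by positivity)] with k hk
  have hpt : ∀ x ∈ F, ‖⟪u k x, G k x - G₀ x⟫_ℝ‖ ≤ ε / (C + 1) * ‖u k x‖ := fun x hx => by
    refine (norm_inner_le_norm _ _).trans ?_
    rw [mul_comm, ← dist_eq_norm, dist_comm]
    gcongr
    exact (hk x hx).le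
  calc dist (∫ x in F, ⟪u k x, G k x - G₀ x⟫_ℝ ∂μ) 0
      ≤ ∫ x in F, ε / (C + 1) * ‖u k x‖ ∂μ := by
        rw [dist_zero_right]
        exact norm_integral_le_of_norm_le ((hu k).restrict.norm.const_mul _)
          (ae_restrict_of_forall_mem hF hpt)
    _ ≤ ε / (C + 1) * C := by
        rw [integral_const_mul]
        gcongr
        exact (setIntegral_le_integral (hu k).norm (ae_of_all _ fun x => norm_nonneg _)).trans
          (hC k)
    _ < ε := by
        rw [div_mul_eq_mul_div, div_lt_iff₀ (by positivity)]
        nlinarith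

variable [MeasurableSpace V]

def TendstoWeakL1 (μ : Measure α) (u : ℕ → α → V) (u₀ : α → V) : Prop :=
  ∀ φ : α → V, Measurable φ → (∃ C, ∀ x, ‖φ x‖ ≤ C) →
    Tendsto (fun k => ∫ x, ⟪u k x, φ x⟫_ℝ ∂μ) atTop (𝓝 (∫ x, ⟪u₀ x, φ x⟫_ℝ ∂μ))

theorem TendstoWeakL1.congr_ae {u : ℕ → α → V} {u₀ u₁ : α → V} (h : TendstoWeakL1 μ u u₀)
    (h₀₁ : u₀ =ᵐ[μ] u₁) : TendstoWeakL1 μ u u₁ := fun φ hφ hφC => by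
  convert h φ hφ hφC using 2
  exact integral_congr_ae (h₀₁.mono fun x hx => by simp only [hx])

theorem TendstoWeakL1.tendsto_setIntegral_inner_sub [BorelSpace V] [SecondCountableTopology V]
    {u : ℕ → α → V} {u₀ ψ : α → V} {F : Set α} {C : ℝ} (h : TendstoWeakL1 μ u u₀)
    (hu : ∀ k, Integrable (u k) μ) (hu₀ : Integrable u₀ μ) (hF : MeasurableSet F)
    (hψ : Measurable ψ) (hψC : ∀ x ∈ F, ‖ψ x‖ ≤ C) :
    Tendsto (fun k => ∫ x in F, ⟪u k x - u₀ x, ψ x⟫_ℝ ∂μ) atTop (𝓝 0) := by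
  set φ := F.indicator ψ
  have hφ : Measurable φ := hψ.indicator hF
  have hφC : ∀ x, ‖φ x‖ ≤ max C 0 := fun x => by
    by_cases hx : x ∈ F <;> simp [φ, hx, hψC]
  have hint : ∀ w : α → V, Integrable w μ → Integrable (fun x => ⟪w x, φ x⟫_ℝ) μ :=
    fun w hw => hw.inner_of_bdd hφ.aestronglyMeasurable (ae_of_all _ hφC)
  have hsplit : ∀ k, ∫ x in F, ⟪u k x - u₀ x, ψ x⟫_ℝ ∂μ =
      ∫ x, ⟪u k x, φ x⟫_ℝ ∂μ - ∫ x, ⟪u₀ x, φ x⟫_ℝ ∂μ := fun k => by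
    rw [← integral_sub (hint _ (hu k)) (hint _ hu₀), ← integral_indicator hF]
    congr 1 with x
    by_cases hx : x ∈ F <;> simp [φ, hx, inner_sub_left]
  simpa [hsplit] using (h φ hφ ⟨_, hφC⟩).sub_const (∫ x, ⟪u₀ x, φ x⟫_ℝ ∂μ)

theorem TendstoWeakL1.tendsto_setIntegral_inner_sub_of_tendstoUniformlyOn [BorelSpace V]
    [SecondCountableTopology V] {u G : ℕ → α → V} {u₀ G₀ : α → V} {F : Set α} {C : ℝ}
    (h : TendstoWeakL1 μ u u₀) (hu : ∀ k, Integrable (u k) μ) (hu₀ : Integrable u₀ μ)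
    (hbdd : ∃ C, ∀ k, ∫ x, ‖u k x‖ ∂μ ≤ C) (hF : MeasurableSet F) (hG : ∀ k, Measurable (G k))
    (hG₀ : Measurable G₀) (hGC : ∀ᶠ k in atTop, ∀ x ∈ F, ‖G k x‖ ≤ C)
    (hG₀C : ∀ x ∈ F, ‖G₀ x‖ ≤ C) (hunif : TendstoUniformlyOn G G₀ atTop F) :
    Tendsto (fun k => ∫ x in F, ⟪u k x - u₀ x, G k x⟫_ℝ ∂μ) atTop (𝓝 0) := by
  have hlim := (h.tendsto_setIntegral_inner_sub hu hu₀ hF hG₀ hG₀C).add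
    (tendsto_setIntegral_inner_of_tendstoUniformlyOn (u := fun k x => u k x - u₀ x) hF
      (fun k => (hu k).sub hu₀) (exists_integral_norm_sub_le hu hu₀ hbdd) hunif)
  rw [add_zero] at hlim
  refine hlim.congr' (hGC.mono fun k hk => ?_)
  have hint₀ : Integrable (fun x => ⟪u k x - u₀ x, G₀ x⟫_ℝ) (μ.restrict F) :=
    ((hu k).sub hu₀).restrict.inner_of_bdd hG₀.aestronglyMeasurable
      (ae_restrict_of_forall_mem hF hG₀C)
  have hint : Integrable (fun x => ⟪u k x - u₀ x, G k x - G₀ x⟫_ℝ) (μ.restrict F) :=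
    ((hu k).sub hu₀).restrict.inner_of_bdd ((hG k).sub hG₀).aestronglyMeasurable
      (ae_restrict_of_forall_mem hF fun x hx =>
        (norm_sub_le _ _).trans (add_le_add (hk x hx) (hG₀C x hx)))
  rw [← integral_add hint₀ hint]
  congr 1 with x
  rw [← inner_add_right, add_sub_cancel]

end Measure

theorem TendstoUniformlyOn.eventually_mapsTo_cthickening {α X : Type*} [PseudoMetricSpace X]
    {f : ℕ → α → X} {f₀ : α → X} {F : Set α} {K : Set X} (h : TendstoUniformlyOn f f₀ atTop F)
    (hK : Set.MapsTo f₀ F K) {δ : ℝ} (hδ : 0 < δ) :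
    ∀ᶠ k in atTop, Set.MapsTo (f k) F (Metric.cthickening δ K) :=
  (Metric.tendstoUniformlyOn_iff.1 h δ hδ).mono fun _ hk x hx =>
    Metric.mem_cthickening_of_dist_le _ _ _ _ (hK hx) (by rw [dist_comm]; exact (hk x hx).le)

section Integrand

variable {α E V : Type*} [MeasurableSpace α] {μ : Measure α} [IsFiniteMeasure μ]
  [MetricSpace E] [ProperSpace E] [MeasurableSpace E] [BorelSpace E]
  [NormedAddCommGroup V] [InnerProductSpace ℝ V] [ProperSpace V] [MeasurableSpace V]
  [BorelSpace V] {Φ : E × V → ℝ} {g : E × V → V}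
  {vk : ℕ → α → V} {v : α → V} {dk : ℕ → α → E} {d : α → E}

theorem tendsto_setIntegral_add_inner_of_tendstoUniformlyOn (hΦ : Continuous Φ)
    (hg : Continuous g) (hvk : ∀ k, Integrable (vk k) μ) (hv : Integrable v μ)
    (hvm : Measurable v) (hweak : TendstoWeakL1 μ vk v) (hbdd : ∃ C, ∀ k, ∫ x, ‖vk k x‖ ∂μ ≤ C)
    (hdkm : ∀ k, Measurable (dk k)) (hdm : Measurable d) {F : Set α} (hF : MeasurableSet F)
    (hd : TendstoUniformlyOn dk d atTop F) {K : Set (E × V)} (hK : IsCompact K)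
    (hFK : Set.MapsTo (fun x => (d x, v x)) F K) :
    Tendsto (fun k => ∫ x in F, (Φ (dk k x, v x) + ⟪vk k x - v x, g (dk k x, v x)⟫_ℝ) ∂μ)
      atTop (𝓝 (∫ x in F, Φ (d x, v x) ∂μ)) := by
  have hpk : TendstoUniformlyOn (fun k x => (dk k x, v x)) (fun x => (d x, v x)) atTop F :=
    Metric.tendstoUniformlyOn_iff.2 fun ε hε =>
      (Metric.tendstoUniformlyOn_iff.1 hd ε hε).mono fun k hk x hx => by
        simpa [Prod.dist_eq] using hk x hx
  set K' := Metric.cthickening 1 K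
  have hK' : IsCompact K' := hK.cthickening
  have hFK' : Set.MapsTo (fun x => (d x, v x)) F K' :=
    hFK.mono_right (Metric.self_subset_cthickening K)
  have hpkK' := hpk.eventually_mapsTo_cthickening hFK one_pos
  obtain ⟨B, hΦB⟩ := hK'.exists_bound_of_continuousOn hΦ.continuousOn
  obtain ⟨C', hgC⟩ := hK'.exists_bound_of_continuousOn hg.continuousOn
  have hgk := (hK'.uniformContinuousOn_of_continuous hg.continuousOn
    ).comp_tendstoUniformlyOn_eventually hpkK' hFK' hpk
  have hΦm : ∀ k, AEStronglyMeasurable (fun x => Φ (dk k x, v x)) μ := fun k =>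
    (hΦ.measurable.comp ((hdkm k).prodMk hvm)).aestronglyMeasurable
  have hgm : ∀ k, Measurable fun x => g (dk k x, v x) := fun k =>
    hg.measurable.comp ((hdkm k).prodMk hvm)
  have hlimΦ : Tendsto (fun k => ∫ x in F, Φ (dk k x, v x) ∂μ) atTop
      (𝓝 (∫ x in F, Φ (d x, v x) ∂μ)) :=
    tendsto_integral_filter_of_dominated_convergence (fun _ => B)
      (Eventually.of_forall fun k => (hΦm k).restrict)
      (hpkK'.mono fun k hk => ae_restrict_of_forall_mem hF fun x hx => hΦB _ (hk hx))
      (integrable_const B)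
      (ae_restrict_of_forall_mem hF fun x hx => (hΦ.tendsto _).comp (hpk.tendsto_at hx))
  have hlim := hlimΦ.add (hweak.tendsto_setIntegral_inner_sub_of_tendstoUniformlyOn hvk hv hbdd
    hF hgm (hg.measurable.comp (hdm.prodMk hvm)) (hpkK'.mono fun k hk x hx => hgC _ (hk hx))
    (fun x hx => hgC _ (hFK' hx)) hgk)
  rw [add_zero] at hlim
  refine hlim.congr' (hpkK'.mono fun k hk => (integral_add ?_ ?_).symm)
  · exact Measure.integrableOn_of_bounded (measure_ne_top _ _) (hΦm k)
      (ae_restrict_of_forall_mem hF fun x hx => hΦB _ (hk hx))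
  · exact ((hvk k).sub hv).restrict.inner_of_bdd (hgm k).aestronglyMeasurable
      (ae_restrict_of_forall_mem hF fun x hx => hgC _ (hk hx))

theorem setLIntegral_le_liminf_lintegral_of_tendstoUniformlyOn (hΦ0 : ∀ p, 0 ≤ Φ p)
    (hΦ : Continuous Φ) (hg : Continuous g)
    (hΦg : ∀ a u w, Φ (a, u) + ⟪g (a, u), w - u⟫_ℝ ≤ Φ (a, w))
    (hvk : ∀ k, Integrable (vk k) μ) (hv : Integrable v μ)
    (hvm : Measurable v) (hweak : TendstoWeakL1 μ vk v) (hbdd : ∃ C, ∀ k, ∫ x, ‖vk k x‖ ∂μ ≤ C)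
    (hdkm : ∀ k, Measurable (dk k)) (hdm : Measurable d) {F : Set α} (hF : MeasurableSet F)
    (hd : TendstoUniformlyOn dk d atTop F) {K : Set (E × V)} (hK : IsCompact K)
    (hFK : Set.MapsTo (fun x => (d x, v x)) F K) :
    ∫⁻ x in F, ENNReal.ofReal (Φ (d x, v x)) ∂μ ≤
      atTop.liminf fun k => ∫⁻ x, ENNReal.ofReal (Φ (dk k x, vk k x)) ∂μ := by
  have hlim := tendsto_setIntegral_add_inner_of_tendstoUniformlyOn hΦ hg hvk hv hvm hweak hbdd
    hdkm hdm hF hd hK hFK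
  have hle : ∀ k, ENNReal.ofReal
      (∫ x in F, (Φ (dk k x, v x) + ⟪vk k x - v x, g (dk k x, v x)⟫_ℝ) ∂μ) ≤
      ∫⁻ x, ENNReal.ofReal (Φ (dk k x, vk k x)) ∂μ := fun k =>
    (ofReal_integral_le_lintegral_ofReal _).trans <|
      (setLIntegral_mono' hF fun x _ => ENNReal.ofReal_le_ofReal <| by
        simpa [real_inner_comm] using hΦg (dk k x) (v x) (vk k x)).trans
      (setLIntegral_le_lintegral _ _)
  obtain ⟨B, hΦB⟩ := hK.exists_bound_of_continuousOn hΦ.continuousOn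
  have hint : IntegrableOn (fun x => Φ (d x, v x)) F μ :=
    Measure.integrableOn_of_bounded (measure_ne_top _ _)
      (hΦ.measurable.comp (hdm.prodMk hvm)).aestronglyMeasurable
      (ae_restrict_of_forall_mem hF fun x hx => hΦB _ (hFK hx))
  calc ∫⁻ x in F, ENNReal.ofReal (Φ (d x, v x)) ∂μ
      = ENNReal.ofReal (∫ x in F, Φ (d x, v x) ∂μ) :=
        (ofReal_integral_eq_lintegral_ofReal hint (ae_of_all _ fun x => hΦ0 _)).symm
    _ = atTop.liminf fun k => ENNReal.ofReal
          (∫ x in F, (Φ (dk k x, v x) + ⟪vk k x - v x, g (dk k x, v x)⟫_ℝ) ∂μ) :=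
        ((ENNReal.continuous_ofReal.tendsto _).comp hlim).liminf_eq.symm
    _ ≤ _ := liminf_le_liminf (Eventually.of_forall hle)

theorem lintegral_le_liminf_lintegral_of_tendstoWeakL1 (hΦ0 : ∀ p, 0 ≤ Φ p)
    (hΦ : Continuous Φ) (hg : Continuous g)
    (hΦg : ∀ a u w, Φ (a, u) + ⟪g (a, u), w - u⟫_ℝ ≤ Φ (a, w))
    (hvk : ∀ k, Integrable (vk k) μ) (hv : Integrable v μ)
    (hvm : Measurable v) (hweak : TendstoWeakL1 μ vk v) (hbdd : ∃ C, ∀ k, ∫ x, ‖vk k x‖ ∂μ ≤ C)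
    (hdkm : ∀ k, Measurable (dk k)) (hdm : Measurable d)
    (hdconv : ∀ᵐ x ∂μ, Tendsto (fun k => dk k x) atTop (𝓝 (d x))) :
    ∫⁻ x, ENNReal.ofReal (Φ (d x, v x)) ∂μ ≤
      atTop.liminf fun k => ∫⁻ x, ENNReal.ofReal (Φ (dk k x, vk k x)) ∂μ := by
  refine lintegral_le_of_forall_setLIntegral_le
    (hΦ.measurable.comp (hdm.prodMk hvm)).ennreal_ofReal.aemeasurable fun ε hε => ?_
  obtain ⟨F, hF, hFc, hdF, K, hK, hFK⟩ :=
    exists_measurableSet_tendstoUniformlyOn_mapsTo_isCompact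
      (fun k => (hdkm k).stronglyMeasurable) hdm.stronglyMeasurable hdconv (hdm.prodMk hvm) hε
  exact ⟨F, hF, hFc, setLIntegral_le_liminf_lintegral_of_tendstoUniformlyOn hΦ0 hΦ hg hΦg hvk hv
    hvm hweak hbdd hdkm hdm hF hdF hK hFK⟩

end Integrand

theorem swlsc_convex_integrand_ae_parameter_general {n m N : ℕ}
    (Ω : Set (Fin n → ℝ)) (hfin : volume Ω < ⊤)
    (Φ : EuclideanSpace ℝ (Fin m) × EuclideanSpace ℝ (Fin N) → ℝ)
    (hΦ0 : ∀ p, 0 ≤ Φ p) (hΦc : Continuous Φ)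
    (hΦconv : ∀ d, ConvexOn ℝ Set.univ (fun w => Φ (d, w)))
    (hΦdiff : ∀ d, Differentiable ℝ (fun w => Φ (d, w)))
    (hΦderiv : Continuous fun p : EuclideanSpace ℝ (Fin m) × EuclideanSpace ℝ (Fin N) =>
      fderiv ℝ (fun w => Φ (p.1, w)) p.2)
    (vk : ℕ → (Fin n → ℝ) → EuclideanSpace ℝ (Fin N))
    (v : (Fin n → ℝ) → EuclideanSpace ℝ (Fin N))
    (hvk : ∀ k, IntegrableOn (vk k) Ω) (hv : IntegrableOn v Ω)
    (hweak : ∀ φ : (Fin n → ℝ) → EuclideanSpace ℝ (Fin N), Measurable φ →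
      (∃ C, ∀ x, ‖φ x‖ ≤ C) →
      Tendsto (fun k => ∫ x in Ω, (inner ℝ (vk k x) (φ x) : ℝ)) atTop
        (𝓝 (∫ x in Ω, (inner ℝ (v x) (φ x) : ℝ))))
    (hbdd : ∃ C, ∀ k, (∫ x in Ω, ‖vk k x‖) ≤ C)
    (dk : ℕ → (Fin n → ℝ) → EuclideanSpace ℝ (Fin m))
    (d : (Fin n → ℝ) → EuclideanSpace ℝ (Fin m))
    (hdkm : ∀ k, Measurable (dk k)) (hdm : Measurable d)
    (hdconv : ∀ᵐ x ∂(volume.restrict Ω), Tendsto (fun k => dk k x) atTop (𝓝 (d x))) :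
    ∫⁻ x in Ω, ENNReal.ofReal (Φ (d x, v x)) ≤
      atTop.liminf fun k => ∫⁻ x in Ω, ENNReal.ofReal (Φ (dk k x, vk k x)) := by
  have : IsFiniteMeasure (volume.restrict Ω) := isFiniteMeasure_restrict.2 hfin.ne
  let g : EuclideanSpace ℝ (Fin m) × EuclideanSpace ℝ (Fin N) → EuclideanSpace ℝ (Fin N) :=
    fun p => (InnerProductSpace.toDual ℝ _).symm (fderiv ℝ (fun w => Φ (p.1, w)) p.2)
  have hg : Continuous g := (InnerProductSpace.toDual ℝ _).symm.continuous.comp hΦderiv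
  have hΦg : ∀ a u w, Φ (a, u) + ⟪g (a, u), w - u⟫_ℝ ≤ Φ (a, w) := fun a u w => by
    simpa [g, InnerProductSpace.toDual_symm_apply] using
      (hΦconv a).add_fderiv_sub_le trivial trivial (hΦdiff a u).hasFDerivAt
  -- The test field `g (d, v)` must be measurable, so pass to a measurable representative of `v`.
  set v' := hv.aestronglyMeasurable.mk v
  have hvv' : v =ᵐ[volume.restrict Ω] v' := hv.aestronglyMeasurable.ae_eq_mk
  calc ∫⁻ x in Ω, ENNReal.ofReal (Φ (d x, v x))
      = ∫⁻ x in Ω, ENNReal.ofReal (Φ (d x, v' x)) :=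
        lintegral_congr_ae (hvv'.mono fun x hx => by simp only [hx])
    _ ≤ _ := lintegral_le_liminf_lintegral_of_tendstoWeakL1 hΦ0 hΦc hg hΦg hvk (hv.congr hvv')
        hv.aestronglyMeasurable.stronglyMeasurable_mk.measurable
        (TendstoWeakL1.congr_ae hweak hvv') hbdd hdkm hdm hdconv

/-- Sequential weak lower semicontinuity of convex integrands with an
a.e.-convergent parameter: let `Ω ⊆ ℝⁿ` have finite measure, let
`Φ : ℝᵐ × ℝᴺ → [0,∞)` be continuous, convex and C¹ in its second argument with
jointly continuous derivative. If `vk ⇀ v` weakly in `L¹(Ω, ℝᴺ)` with uniformly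
bounded `L¹` norms, and `dk → d` pointwise a.e., then
`liminf_k ∫_Ω Φ(dk, vk) ≥ ∫_Ω Φ(d, v)` (integrals taken in `[0,∞]`). -/
theorem swlsc_convex_integrand_ae_parameter {n m N : ℕ}
    (Ω : Set (Fin n → ℝ)) (hΩ : MeasurableSet Ω) (hfin : volume Ω < ⊤)
    (Φ : EuclideanSpace ℝ (Fin m) × EuclideanSpace ℝ (Fin N) → ℝ)
    (hΦ0 : ∀ p, 0 ≤ Φ p) (hΦc : Continuous Φ)
    (hΦconv : ∀ d, ConvexOn ℝ Set.univ (fun w => Φ (d, w)))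
    (hΦdiff : ∀ d, Differentiable ℝ (fun w => Φ (d, w)))
    (hΦderiv : Continuous fun p : EuclideanSpace ℝ (Fin m) × EuclideanSpace ℝ (Fin N) =>
      fderiv ℝ (fun w => Φ (p.1, w)) p.2)
    (vk : ℕ → (Fin n → ℝ) → EuclideanSpace ℝ (Fin N))
    (v : (Fin n → ℝ) → EuclideanSpace ℝ (Fin N))
    (hvk : ∀ k, IntegrableOn (vk k) Ω) (hv : IntegrableOn v Ω)
    (hweak : ∀ φ : (Fin n → ℝ) → EuclideanSpace ℝ (Fin N), Measurable φ →
      (∃ C, ∀ x, ‖φ x‖ ≤ C) →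
      Tendsto (fun k => ∫ x in Ω, (inner ℝ (vk k x) (φ x) : ℝ)) atTop
        (𝓝 (∫ x in Ω, (inner ℝ (v x) (φ x) : ℝ))))
    (hbdd : ∃ C, ∀ k, (∫ x in Ω, ‖vk k x‖) ≤ C)
    (dk : ℕ → (Fin n → ℝ) → EuclideanSpace ℝ (Fin m))
    (d : (Fin n → ℝ) → EuclideanSpace ℝ (Fin m))
    (hdkm : ∀ k, Measurable (dk k)) (hdm : Measurable d)
    (hdconv : ∀ᵐ x ∂(volume.restrict Ω), Tendsto (fun k => dk k x) atTop (𝓝 (d x))) :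
    ∫⁻ x in Ω, ENNReal.ofReal (Φ (d x, v x)) ≤
      atTop.liminf fun k => ∫⁻ x in Ω, ENNReal.ofReal (Φ (dk k x, vk k x)) :=
  swlsc_convex_integrand_ae_parameter_general Ω hfin Φ hΦ0 hΦc hΦconv hΦdiff hΦderiv vk v hvk hv
    hweak hbdd dk d hdkm hdm hdconv
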